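/- The 6-dimensional complex algebras N⁶₁₆(3) and N⁶₀₅(3) are isomorphic, where N⁶₁₆(λ) has nonzero products e₁e₁ = e₂, e₁e₂ = e₃, e₁e₃ = (2-λ)e₅, e₁e₄ = e₆, e₁e₅ = (3-2λ)e₆, e₂e₁ = λe₃ + e₄, e₂e₂ = λe₅, e₂e₃ = λ(2-λ)e₆, e₃e₁ = λe₅, e₃e₂ = λe₆, e₄e₁ = -e₆, e₅e₁ = λe₆, and N⁶₀₅(λ) has nonzero products e₁e₁ = e₂, e₁e₂ = e₃, e₁e₃ = (2-λ)e₄, e₁e₄ = (3-2λ)e₅, e₂e₁ = λe₃ + e₆, e₂e₂ = λe₄, e₂e₃ = λ(2-λ)e₅, e₃e₁ = λe₄, e₃e₂ = λe₅, e₄e₁ = λe₅. -/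
import Mathlib
set_option maxHeartbeats 1000000


/-- The 6-dimensional algebra `N⁶₁₆(λ)` over ℂ, with basis `e₁,…,e₆` and
nonzero products `e₁e₁ = e₂`, `e₁e₂ = e₃`, `e₁e₃ = (2-λ)e₅`, `e₁e₄ = e₆`,
`e₁e₅ = (3-2λ)e₆`, `e₂e₁ = λe₃ + e₄`, `e₂e₂ = λe₅`, `e₂e₃ = λ(2-λ)e₆`,
`e₃e₁ = λe₅`, `e₃e₂ = λe₆`, `e₄e₁ = -e₆`, `e₅e₁ = λe₆`. -/
noncomputable def mulN616 (l : ℂ) (a b : Fin 6 → ℂ) : Fin 6 → ℂ :=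
  ![0, a 0 * b 0,
    a 0 * b 1 + l * (a 1 * b 0),
    a 1 * b 0,
    (2 - l) * (a 0 * b 2) + l * (a 1 * b 1) + l * (a 2 * b 0),
    a 0 * b 3 + (3 - 2 * l) * (a 0 * b 4) + l * (2 - l) * (a 1 * b 2)
      + l * (a 2 * b 1) - a 3 * b 0 + l * (a 4 * b 0)]

/-- The 6-dimensional algebra `N⁶₀₅(λ)` over ℂ, with basis `e₁,…,e₆` and
nonzero products `e₁e₁ = e₂`, `e₁e₂ = e₃`, `e₁e₃ = (2-λ)e₄`,
`e₁e₄ = (3-2λ)e₅`, `e₂e₁ = λe₃ + e₆`, `e₂e₂ = λe₄`, `e₂e₃ = λ(2-λ)e₅`,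
`e₃e₁ = λe₄`, `e₃e₂ = λe₅`, `e₄e₁ = λe₅`. -/
noncomputable def mulN605 (l : ℂ) (a b : Fin 6 → ℂ) : Fin 6 → ℂ :=
  ![0, a 0 * b 0,
    a 0 * b 1 + l * (a 1 * b 0),
    (2 - l) * (a 0 * b 2) + l * (a 1 * b 1) + l * (a 2 * b 0),
    (3 - 2 * l) * (a 0 * b 3) + l * (2 - l) * (a 1 * b 2)
      + l * (a 2 * b 1) + l * (a 3 * b 0),
    a 1 * b 0]


private lemma vec6_five {α : Type*} (a b c d e f : α) :
    (![a, b, c, d, e, f] : Fin 6 → α) 5 = f := rfl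

private lemma vec6_four {α : Type*} (a b c d e f : α) :
    (![a, b, c, d, e, f] : Fin 6 → α) 4 = e := rfl

/-- The forward map of the isomorphism. -/
noncomputable def phiFun (a : Fin 6 → ℂ) : Fin 6 → ℂ :=
  ![a 0, -1/54 * a 0 + a 1, -2/27 * a 1 + a 2,
    1/972 * a 1 + 1/54 * a 2 - 1/3 * a 3 + a 4,
    -7/972 * a 2 + 7/243 * a 3 + a 5,
    -1/54 * a 1 + a 3]

/-- The inverse map of the isomorphism. -/
noncomputable def psiFun (a : Fin 6 → ℂ) : Fin 6 → ℂ :=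
  ![a 0, 1/54 * a 0 + a 1, 1/729 * a 0 + 2/27 * a 1 + a 2,
    1/2916 * a 0 + 1/54 * a 1 + a 5,
    11/157464 * a 0 + 11/2916 * a 1 - 1/54 * a 2 + a 3 + 1/3 * a 5,
    7/972 * a 2 + a 4 - 7/243 * a 5]

noncomputable def phiEquiv : (Fin 6 → ℂ) ≃ₗ[ℂ] (Fin 6 → ℂ) where
  toFun := phiFun
  invFun := psiFun
  map_add' a b := by
    funext i
    fin_cases i <;> simp [phiFun, Matrix.cons_val_succ, vec6_five, vec6_four] <;> ring
  map_smul' c a := by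
    funext i
    fin_cases i <;> simp [phiFun, Matrix.cons_val_succ, vec6_five, vec6_four] <;> ring
  left_inv a := by
    funext i
    fin_cases i <;> simp [phiFun, psiFun, Matrix.cons_val_succ, vec6_five, vec6_four] <;> ring
  right_inv a := by
    funext i
    fin_cases i <;> simp [phiFun, psiFun, Matrix.cons_val_succ, vec6_five, vec6_four] <;> ring

/-- `N⁶₁₆(3)` and `N⁶₀₅(3)` are isomorphic. -/
theorem N616_three_iso_N605_three :
    ∃ φ : (Fin 6 → ℂ) ≃ₗ[ℂ] (Fin 6 → ℂ),
      ∀ a b : Fin 6 → ℂ, φ (mulN616 3 a b) = mulN605 3 (φ a) (φ b) := by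
  refine ⟨phiEquiv, fun a b => ?_⟩
  funext i
  show phiFun (mulN616 3 a b) i = mulN605 3 (phiFun a) (phiFun b) i
  fin_cases i <;> simp [phiFun, mulN616, mulN605, Matrix.cons_val_succ, vec6_five, vec6_four] <;> ring
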